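/- Fix μ₀ > 0. There exists κ > 0 (depending only on s, r, μ₀) such that Γ̃_μ < μ − κ μ³ for every μ ∈ (0, μ₀). -/

import Mathlib

open MeasureTheory Real Filter

noncomputable section

/-- The Japanese bracket weight `⟨ξ⟩^α = (1+ξ²)^{α/2}`. -/
def jap (α ξ : ℝ) : ℝ := (1 + ξ ^ 2) ^ (α / 2)

/-- `w` is the Fourier transform of the (real-valued) function `u` in the sense of
tempered distributions. -/
def IsWeakFourier (u : ℝ → ℝ) (w : ℝ → ℂ) : Prop :=
  AEStronglyMeasurable w volume ∧
    ∀ φ : SchwartzMap ℝ ℂ,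
      ∫ x, (u x : ℂ) * (SchwartzMap.fourierTransformCLM ℂ φ) x = ∫ ξ, w ξ * φ ξ

open Classical in
/-- A choice of weak Fourier transform of `u`. -/
def wft (u : ℝ → ℝ) : ℝ → ℂ :=
  if h : ∃ w : ℝ → ℂ, IsWeakFourier u w then h.choose else 0

/-- `u` belongs to the Sobolev space `H^t(ℝ)`. -/
def MemH (t : ℝ) (u : ℝ → ℝ) : Prop :=
  MemLp u 2 volume ∧
    ∃ w : ℝ → ℂ, IsWeakFourier u w ∧
      Integrable (fun ξ => jap (2 * t) ξ * ‖w ξ‖ ^ 2)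

/-- The `H^t(ℝ)` norm of `u`, `‖u‖_{H^t} = (∫ ⟨ξ⟩^{2t} |û(ξ)|² dξ)^{1/2}`. -/
def HNorm (t : ℝ) (u : ℝ → ℝ) : ℝ :=
  Real.sqrt (∫ ξ, jap (2 * t) ξ * ‖wft u ξ‖ ^ 2)

/-- The `L^p(ℝ)` norm of `u`. -/
def LpNorm (p : ℝ) (u : ℝ → ℝ) : ℝ := (∫ x, |u x| ^ p) ^ (1 / p)

/-- `Q(u) = ½ ∫ u² dx`. -/
def Qf (u : ℝ → ℝ) : ℝ := (1 / 2) * ∫ x, u x ^ 2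

/-- `L(u) = ½ ∫ u Λ^s u dx = ½ ∫ ⟨ξ⟩^s |û|² dξ`. -/
def Lf (s : ℝ) (u : ℝ → ℝ) : ℝ := (1 / 2) * ∫ ξ, jap s ξ * ‖wft u ξ‖ ^ 2

/-- `Ñ(u) = ¼ ∫ u² Λ^r u² dx = ¼ ∫ ⟨ξ⟩^r |𝓕(u²)|² dξ`. -/
def Nf (r : ℝ) (u : ℝ → ℝ) : ℝ :=
  (1 / 4) * ∫ ξ, jap r ξ * ‖wft (fun x => u x ^ 2) ξ‖ ^ 2

/-- `Ẽ(u) = L(u) − Ñ(u)`. -/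
def Ef (s r : ℝ) (u : ℝ → ℝ) : ℝ := Lf s u - Nf r u

/-- `Γ̃_μ = inf {Ẽ(u) : u ∈ H^{s/2}, Q(u) = μ}`. -/
def Gamma (s r μ : ℝ) : ℝ :=
  sInf {e : ℝ | ∃ u : ℝ → ℝ, MemH (s / 2) u ∧ Qf u = μ ∧ Ef s r u = e}

/-- The Fourier transform of the nonlinear term `u Λ^r(u²)`, i.e. the convolution
`û ∗ (⟨·⟩^r 𝓕(u²))`. -/
def nlFT (r : ℝ) (u : ℝ → ℝ) (ξ : ℝ) : ℂ :=
  ∫ η, wft u (ξ - η) * ((jap r η : ℂ) * wft (fun x => u x ^ 2) η)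

/-- `u` solves the solitary-wave equation `-ν u + Λ^s u - u Λ^r(u²) = 0` as an identity of
tempered distributions (stated on the Fourier side, where the Fourier transform is an
isomorphism of the tempered distributions). -/
def IsSolitaryWave (s r ν : ℝ) (u : ℝ → ℝ) : Prop :=
  ∀ φ : SchwartzMap ℝ ℂ,
    ∫ ξ, (((jap s ξ - ν : ℝ) : ℂ) * wft u ξ - nlFT r u ξ) * φ ξ = 0

/-- The commutator integral `∫ v (ρ_R Λ^α u − Λ^α(ρ_R u)) dx`, written on the Fourier side
(`𝓕(ρ_R)(t) = R ρ̂(R t)`). -/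
def commutatorIntegral (α : ℝ) (ρ : SchwartzMap ℝ ℂ) (u v : ℝ → ℝ) (R : ℝ) : ℂ :=
  ∫ ξ, (starRingEnd ℂ) (wft v ξ) *
    ∫ t, ((R : ℂ) * (SchwartzMap.fourierTransformCLM ℂ ρ) (R * t)) *
      (((jap α (ξ - t) - jap α ξ : ℝ) : ℂ) * wft u (ξ - t))


/-!
Test the infimum against a Gaussian `u` with `Q(u) = μ` whose Fourier transform has width
`β = εμ`. Bounding `⟨ξ⟩^α` above and below by `exp (±|α| ξ² / 2)` turns `L(u)` and `Ñ(u)` into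
Gaussian integrals, giving `L(u) ≤ μ (1 + |s| β²)` and `Ñ(u) ≥ μ² β / 2` for small `β`. Hence
`Ẽ(u) ≤ μ + (|s| ε² - ε / 2) μ³ ≤ μ - (ε / 4) μ³` once `ε` is small in terms of `s`, `r`, `μ₀`.
-/

open FourierTransform
open scoped ContDiff

theorem integral_fourier_mul_eq_of_integrable {f g : ℝ → ℂ} (hf : Integrable f)
    (hg : Integrable g) : ∫ ξ, 𝓕 f ξ * g ξ = ∫ x, f x * 𝓕 g x := by
  have h := VectorFourier.integral_fourierIntegral_smul_eq_flip (L := innerₗ ℝ)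
    Real.continuous_fourierChar continuous_inner hf hg
  have hflip : (innerₗ ℝ).flip = innerₗ ℝ := by
    ext
    simp
  rw [hflip] at h
  simp only [smul_eq_mul] at h
  exact h

theorem isWeakFourier_wft {u : ℝ → ℝ} {w : ℝ → ℂ} (hw : IsWeakFourier u w) :
    IsWeakFourier u (wft u) := by
  have hex : ∃ w, IsWeakFourier u w := ⟨w, hw⟩
  rw [wft, dif_pos hex]
  exact hex.choose_spec

theorem IsWeakFourier.integral_smul_eq {u : ℝ → ℝ} {w w' : ℝ → ℂ} (hw : IsWeakFourier u w)
    (hw' : IsWeakFourier u w') {g : ℝ → ℝ} (hg : ContDiff ℝ ∞ g) (hgs : HasCompactSupport g) :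
    ∫ ξ, g ξ • w ξ = ∫ ξ, g ξ • w' ξ := by
  let φ : SchwartzMap ℝ ℂ :=
    (hgs.comp_left Complex.ofReal_zero).toSchwartzMap (Complex.ofRealCLM.contDiff.comp hg)
  have hφ (v : ℝ → ℂ) (ξ : ℝ) : g ξ • v ξ = v ξ * φ ξ := by
    rw [Complex.real_smul, mul_comm]
    rfl
  simp only [hφ, ← hw.2 φ, ← hw'.2 φ]

/-- Testing against a bump equal to `1` on `K`: were `w` not integrable on `K`, the pairing
with the bump would be the junk value `0`, whereas pairing with `G > 0` gives a positive number. -/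
theorem IsWeakFourier.locallyIntegrable {u : ℝ → ℝ} {w : ℝ → ℂ} {G : ℝ → ℝ}
    (hw : IsWeakFourier u w) (hG : IsWeakFourier u fun ξ => (G ξ : ℂ)) (hGc : Continuous G)
    (hGpos : ∀ ξ, 0 < G ξ) : LocallyIntegrable w := by
  rw [locallyIntegrable_iff]
  intro K hK
  obtain ⟨R, hR⟩ := hK.isBounded.subset_closedBall 0
  let c : ContDiffBump (0 : ℝ) := ⟨|R| + 1, |R| + 2, by positivity, by linarith⟩
  have hcK : ∀ x ∈ K, c x = 1 := fun x hx =>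
    c.one_of_mem_closedBall (Metric.closedBall_subset_closedBall
      ((le_abs_self R).trans (le_add_of_nonneg_right zero_le_one)) (hR hx))
  have hpos : 0 < ∫ ξ, c ξ * G ξ :=
    (c.continuous.mul hGc).integral_pos_of_hasCompactSupport_nonneg_nonzero
      c.hasCompactSupport.mul_right (fun ξ => mul_nonneg c.nonneg (hGpos ξ).le)
      (x := 0) (by simp [c.one_of_mem_closedBall (Metric.mem_closedBall_self c.rIn_pos.le),
        (hGpos 0).ne'])
  have hpair : ∫ ξ, c ξ • w ξ = ((∫ ξ, c ξ * G ξ : ℝ) : ℂ) := by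
    rw [hw.integral_smul_eq hG c.contDiff c.hasCompactSupport, ← integral_complex_ofReal]
    simp [Complex.real_smul]
  by_contra hK'
  have hnot : ¬ Integrable fun ξ => c ξ • w ξ := fun hint =>
    hK' ((hint.integrableOn (s := K)).congr_fun (fun x hx => by simp [hcK x hx])
      hK.measurableSet)
  rw [integral_undef hnot] at hpair
  exact hpos.ne' (by exact_mod_cast hpair.symm)

theorem wft_ae_eq_of_isWeakFourier {u : ℝ → ℝ} {G : ℝ → ℝ} (hGc : Continuous G)
    (hGpos : ∀ ξ, 0 < G ξ) (hG : IsWeakFourier u fun ξ => (G ξ : ℂ)) :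
    wft u =ᵐ[volume] fun ξ => (G ξ : ℂ) := by
  have hw := isWeakFourier_wft hG
  exact ae_eq_of_integral_contDiff_smul_eq (hw.locallyIntegrable hG hGc hGpos)
    (Complex.continuous_ofReal.comp hGc).locallyIntegrable
    (fun g hg hgs => hw.integral_smul_eq hG hg hgs)

def gaussian (a b x : ℝ) : ℝ := a * rexp (-π * b * x ^ 2)

theorem continuous_gaussian (a b : ℝ) : Continuous (gaussian a b) := by
  unfold gaussian
  fun_prop

theorem gaussian_pos {a : ℝ} (ha : 0 < a) (b x : ℝ) : 0 < gaussian a b x := by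
  unfold gaussian
  positivity

theorem gaussian_nonneg {a : ℝ} (ha : 0 ≤ a) (b x : ℝ) : 0 ≤ gaussian a b x := by
  unfold gaussian
  positivity

theorem gaussian_sq (a b x : ℝ) : gaussian a b x ^ 2 = gaussian (a ^ 2) (2 * b) x := by
  rw [gaussian, gaussian, mul_pow, ← Real.exp_nat_mul]
  ring_nf

theorem gaussian_eq_mul_exp (a b : ℝ) :
    gaussian a b = fun x => a * rexp (-(π * b) * x ^ 2) := by
  ext x
  rw [gaussian, neg_mul]

theorem integrable_gaussian (a : ℝ) {b : ℝ} (hb : 0 < b) : Integrable (gaussian a b) := by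
  rw [gaussian_eq_mul_exp]
  exact (integrable_exp_neg_mul_sq (by positivity)).const_mul a

theorem integral_gaussian_eq (a b : ℝ) : ∫ x, gaussian a b x = a / √b := by
  rw [gaussian_eq_mul_exp, integral_const_mul, integral_gaussian, div_mul_cancel_left₀ pi_ne_zero,
    sqrt_inv, div_eq_mul_inv]

theorem fourier_gaussian (a : ℝ) {b : ℝ} (hb : 0 < b) :
    𝓕 (fun x => (gaussian a b x : ℂ)) = fun ξ => (gaussian (a / √b) b⁻¹ ξ : ℂ) := by
  have hscale : (fun x => (gaussian a b x : ℂ)) =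
      (a : ℂ) • fun x : ℝ => Complex.exp (-π * (b : ℂ) * x ^ 2) := by
    ext x
    simp [gaussian]
  have hsqrt : (b : ℂ) ^ (1 / 2 : ℂ) = (√b : ℂ) := by
    rw [Real.sqrt_eq_rpow, Complex.ofReal_cpow hb.le]
    norm_num
  rw [hscale, show 𝓕 ((a : ℂ) • fun x : ℝ => Complex.exp (-π * (b : ℂ) * x ^ 2)) =
      (a : ℂ) • 𝓕 (fun x : ℝ => Complex.exp (-π * (b : ℂ) * x ^ 2)) from
    VectorFourier.fourierIntegral_const_smul _ _ _ _ _, fourier_gaussian_pi (by simpa using hb)]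
  ext ξ
  simp only [Pi.smul_apply, smul_eq_mul, hsqrt, gaussian]
  push_cast
  field_simp

theorem isWeakFourier_gaussian (a : ℝ) {b : ℝ} (hb : 0 < b) :
    IsWeakFourier (gaussian a b) fun ξ => (gaussian (a / √b) b⁻¹ ξ : ℂ) := by
  refine ⟨(Complex.continuous_ofReal.comp (continuous_gaussian _ _)).aestronglyMeasurable,
    fun φ => ?_⟩
  have hint : Integrable fun x => (gaussian a b x : ℂ) := (integrable_gaussian a hb).ofReal
  have h := integral_fourier_mul_eq_of_integrable hint φ.integrable
  rw [fourier_gaussian a hb] at h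
  exact h.symm

theorem wft_gaussian_ae_eq {a b : ℝ} (ha : 0 < a) (hb : 0 < b) :
    wft (gaussian a b) =ᵐ[volume] fun ξ => (gaussian (a / √b) b⁻¹ ξ : ℂ) :=
  wft_ae_eq_of_isWeakFourier (continuous_gaussian _ _)
    (gaussian_pos (by positivity) _) (isWeakFourier_gaussian a hb)

theorem norm_sq_gaussian_div_sqrt {a b : ℝ} (hb : 0 < b) (ξ : ℝ) :
    ‖(gaussian (a / √b) b⁻¹ ξ : ℂ)‖ ^ 2 = gaussian (a ^ 2 / b) (2 / b) ξ := by
  rw [Complex.norm_real, Real.norm_eq_abs, sq_abs, gaussian_sq, div_pow, sq_sqrt hb.le,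
    ← div_eq_mul_inv]

theorem integral_jap_mul_norm_sq_wft_gaussian (α : ℝ) {a b : ℝ} (ha : 0 < a) (hb : 0 < b) :
    ∫ ξ, jap α ξ * ‖wft (gaussian a b) ξ‖ ^ 2 = ∫ ξ, jap α ξ * gaussian (a ^ 2 / b) (2 / b) ξ := by
  refine integral_congr_ae ?_
  filter_upwards [wft_gaussian_ae_eq ha hb] with ξ hξ
  rw [hξ, norm_sq_gaussian_div_sqrt hb]

theorem jap_pos (α ξ : ℝ) : 0 < jap α ξ :=
  rpow_pos_of_pos (by positivity) _

theorem continuous_jap (α : ℝ) : Continuous (jap α) := by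
  unfold jap
  exact Continuous.rpow_const (by fun_prop) fun ξ => Or.inl (by positivity)

theorem jap_le_exp (α ξ : ℝ) : jap α ξ ≤ rexp (|α| / 2 * ξ ^ 2) := by
  have h1 : 1 ≤ 1 + ξ ^ 2 := by nlinarith [sq_nonneg ξ]
  calc jap α ξ ≤ (1 + ξ ^ 2) ^ (|α| / 2) :=
        rpow_le_rpow_of_exponent_le h1 (by linarith [le_abs_self α])
    _ ≤ rexp (ξ ^ 2) ^ (|α| / 2) := by
        gcongr
        linarith [add_one_le_exp (ξ ^ 2)]
    _ = rexp (|α| / 2 * ξ ^ 2) := by rw [← exp_mul, mul_comm]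

theorem exp_le_jap (α ξ : ℝ) : rexp (-(|α| / 2) * ξ ^ 2) ≤ jap α ξ := by
  have h1 : 1 ≤ 1 + ξ ^ 2 := by nlinarith [sq_nonneg ξ]
  calc rexp (-(|α| / 2) * ξ ^ 2) = rexp (ξ ^ 2) ^ (-(|α| / 2)) := by rw [← exp_mul, mul_comm]
    _ ≤ (1 + ξ ^ 2) ^ (-(|α| / 2)) :=
        rpow_le_rpow_of_nonpos (by positivity) (by linarith [add_one_le_exp (ξ ^ 2)])
          (by linarith [abs_nonneg α])
    _ ≤ jap α ξ := rpow_le_rpow_of_exponent_le h1 (by linarith [neg_abs_le α])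

section GaussianWeight

variable (α : ℝ) {a b : ℝ}

theorem jap_mul_gaussian_le (ha : 0 ≤ a) (ξ : ℝ) :
    jap α ξ * gaussian a b ξ ≤ a * rexp (-(π * b - |α| / 2) * ξ ^ 2) := by
  calc jap α ξ * gaussian a b ξ ≤ rexp (|α| / 2 * ξ ^ 2) * gaussian a b ξ :=
        mul_le_mul_of_nonneg_right (jap_le_exp α ξ) (gaussian_nonneg ha b ξ)
    _ = a * rexp (-(π * b - |α| / 2) * ξ ^ 2) := by
        rw [gaussian, mul_left_comm, ← exp_add]
        ring_nf

theorem le_jap_mul_gaussian (ha : 0 ≤ a) (ξ : ℝ) :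
    a * rexp (-(π * b + |α| / 2) * ξ ^ 2) ≤ jap α ξ * gaussian a b ξ := by
  calc a * rexp (-(π * b + |α| / 2) * ξ ^ 2) = rexp (-(|α| / 2) * ξ ^ 2) * gaussian a b ξ := by
        rw [gaussian, mul_left_comm, ← exp_add]
        ring_nf
    _ ≤ jap α ξ * gaussian a b ξ :=
        mul_le_mul_of_nonneg_right (exp_le_jap α ξ) (gaussian_nonneg ha b ξ)

theorem integrable_jap_mul_gaussian (ha : 0 ≤ a) (h : |α| / 2 < π * b) :
    Integrable fun ξ => jap α ξ * gaussian a b ξ := by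
  refine ((integrable_exp_neg_mul_sq (sub_pos.2 h)).const_mul a).mono'
    ((continuous_jap α).mul (continuous_gaussian a b)).aestronglyMeasurable
    (Eventually.of_forall fun ξ => ?_)
  rw [Real.norm_of_nonneg (mul_nonneg (jap_pos α ξ).le (gaussian_nonneg ha b ξ))]
  exact jap_mul_gaussian_le α ha ξ

theorem integral_jap_mul_gaussian_le (ha : 0 ≤ a) (h : |α| / 2 < π * b) :
    ∫ ξ, jap α ξ * gaussian a b ξ ≤ a * √(π / (π * b - |α| / 2)) := by
  rw [← integral_gaussian, ← integral_const_mul]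
  exact integral_mono (integrable_jap_mul_gaussian α ha h)
    ((integrable_exp_neg_mul_sq (sub_pos.2 h)).const_mul a) (jap_mul_gaussian_le α ha)

theorem le_integral_jap_mul_gaussian (ha : 0 ≤ a) (h : |α| / 2 < π * b) :
    a * √(π / (π * b + |α| / 2)) ≤ ∫ ξ, jap α ξ * gaussian a b ξ := by
  rw [← integral_gaussian, ← integral_const_mul]
  exact integral_mono ((integrable_exp_neg_mul_sq (by linarith [abs_nonneg α])).const_mul a)
    (integrable_jap_mul_gaussian α ha h) (le_jap_mul_gaussian α ha)

end GaussianWeight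

def trialWave (μ β : ℝ) : ℝ → ℝ := gaussian √(2 * μ * β) (β ^ 2 / 2)

section TrialWave

variable {μ β : ℝ} (hμ : 0 < μ) (hβ : 0 < β)
include hμ hβ

theorem trialWave_sq : (fun x => trialWave μ β x ^ 2) = gaussian (2 * μ * β) (β ^ 2) := by
  ext x
  rw [trialWave, gaussian_sq, sq_sqrt (by positivity)]
  ring_nf

theorem qf_trialWave : Qf (trialWave μ β) = μ := by
  rw [Qf, trialWave_sq hμ hβ, integral_gaussian_eq, sqrt_sq hβ.le]
  field_simp

theorem integral_jap_mul_norm_sq_wft_trialWave (α : ℝ) :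
    ∫ ξ, jap α ξ * ‖wft (trialWave μ β) ξ‖ ^ 2 =
      ∫ ξ, jap α ξ * gaussian (4 * μ / β) (4 / β ^ 2) ξ := by
  rw [trialWave, integral_jap_mul_norm_sq_wft_gaussian α (by positivity) (by positivity),
    sq_sqrt (by positivity), show 2 * μ * β / (β ^ 2 / 2) = 4 * μ / β by field_simp; ring,
    show 2 / (β ^ 2 / 2) = 4 / β ^ 2 by field_simp; ring]

theorem integral_jap_mul_norm_sq_wft_trialWave_sq (α : ℝ) :
    ∫ ξ, jap α ξ * ‖wft (fun x => trialWave μ β x ^ 2) ξ‖ ^ 2 =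
      ∫ ξ, jap α ξ * gaussian (4 * μ ^ 2) (2 / β ^ 2) ξ := by
  rw [trialWave_sq hμ hβ, integral_jap_mul_norm_sq_wft_gaussian α (by positivity) (by positivity),
    show (2 * μ * β) ^ 2 / β ^ 2 = 4 * μ ^ 2 by field_simp; ring]

theorem memH_trialWave {s : ℝ} (hs : |s| * β ^ 2 ≤ 1) : MemH (s / 2) (trialWave μ β) := by
  have hcont : Continuous (trialWave μ β) := continuous_gaussian _ _
  refine ⟨(memLp_two_iff_integrable_sq hcont.aestronglyMeasurable).2 ?_,
    _, isWeakFourier_gaussian _ (by positivity), ?_⟩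
  · rw [trialWave_sq hμ hβ]
    exact integrable_gaussian _ (by positivity)
  · simp only [norm_sq_gaussian_div_sqrt (by positivity : (0 : ℝ) < β ^ 2 / 2),
      show 2 * (s / 2) = s by ring]
    refine integrable_jap_mul_gaussian s (by positivity) ?_
    rw [show π * (2 / (β ^ 2 / 2)) = 4 * π / β ^ 2 by field_simp; ring, lt_div_iff₀ (by positivity)]
    nlinarith [pi_gt_three]

theorem lf_trialWave_le {s : ℝ} (hs : |s| * β ^ 2 ≤ 1) :
    Lf s (trialWave μ β) ≤ μ * (1 + |s| * β ^ 2) := by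
  have hweight : |s| / 2 < π * (4 / β ^ 2) := by
    rw [show π * (4 / β ^ 2) = 4 * π / β ^ 2 by ring, lt_div_iff₀ (by positivity)]
    nlinarith [pi_gt_three]
  have hsqrt : √(π / (π * (4 / β ^ 2) - |s| / 2)) ≤ β / 2 * (1 + |s| * β ^ 2) := by
    rw [sqrt_le_left (by positivity),
      show π * (4 / β ^ 2) - |s| / 2 = (8 * π - |s| * β ^ 2) / (2 * β ^ 2) by field_simp; ring,
      div_div_eq_mul_div, div_le_iff₀ (by nlinarith [pi_gt_three])]
    set x := |s| * β ^ 2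
    have hx : 0 ≤ x := by positivity
    have key : 8 * π ≤ (1 + x) ^ 2 * (8 * π - x) := by
      nlinarith [pi_gt_three, mul_nonneg hx hx, mul_nonneg (mul_nonneg hx hx) hx]
    nlinarith [mul_le_mul_of_nonneg_left key (sq_nonneg β)]
  calc Lf s (trialWave μ β)
      ≤ 1 / 2 * (4 * μ / β * √(π / (π * (4 / β ^ 2) - |s| / 2))) := by
        rw [Lf, integral_jap_mul_norm_sq_wft_trialWave hμ hβ]
        gcongr
        exact integral_jap_mul_gaussian_le s (by positivity) hweight
    _ ≤ 1 / 2 * (4 * μ / β * (β / 2 * (1 + |s| * β ^ 2))) := by gcongr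
    _ = μ * (1 + |s| * β ^ 2) := by field_simp; ring

theorem le_nf_trialWave {r : ℝ} (hr : |r| * β ^ 2 ≤ 1) :
    μ ^ 2 * β / 2 ≤ Nf r (trialWave μ β) := by
  have hweight : |r| / 2 < π * (2 / β ^ 2) := by
    rw [show π * (2 / β ^ 2) = 2 * π / β ^ 2 by ring, lt_div_iff₀ (by positivity)]
    nlinarith [pi_gt_three]
  have hsqrt : β / 2 ≤ √(π / (π * (2 / β ^ 2) + |r| / 2)) := by
    have hx : 0 ≤ |r| * β ^ 2 := by positivity
    rw [le_sqrt (by positivity) (by positivity),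
      show π * (2 / β ^ 2) + |r| / 2 = (4 * π + |r| * β ^ 2) / (2 * β ^ 2) by field_simp; ring,
      div_div_eq_mul_div, le_div_iff₀ (by positivity)]
    nlinarith [pi_gt_three, mul_le_mul_of_nonneg_left hr (sq_nonneg β)]
  calc μ ^ 2 * β / 2 = 1 / 4 * (4 * μ ^ 2 * (β / 2)) := by ring
    _ ≤ 1 / 4 * (4 * μ ^ 2 * √(π / (π * (2 / β ^ 2) + |r| / 2))) := by gcongr
    _ ≤ Nf r (trialWave μ β) := by
        rw [Nf, integral_jap_mul_norm_sq_wft_trialWave_sq hμ hβ]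
        gcongr
        exact le_integral_jap_mul_gaussian r (by positivity) hweight

theorem ef_trialWave_le {s r : ℝ} (hs : |s| * β ^ 2 ≤ 1) (hr : |r| * β ^ 2 ≤ 1) :
    Ef s r (trialWave μ β) ≤ μ * (1 + |s| * β ^ 2) - μ ^ 2 * β / 2 := by
  rw [Ef]
  linarith [lf_trialWave_le hμ hβ hs, le_nf_trialWave hμ hβ hr]

end TrialWave

/-- In `ℝ` the infimum of a set that is not bounded below is the junk value `0`, which is why
`x` has to be positive. -/
theorem gamma_lt_of_ef_lt {s r μ x : ℝ} (hx : 0 < x) {u : ℝ → ℝ} (hu : MemH (s / 2) u)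
    (hQ : Qf u = μ) (hE : Ef s r u < x) : Gamma s r μ < x := by
  by_cases hbdd : BddBelow {e : ℝ | ∃ u : ℝ → ℝ, MemH (s / 2) u ∧ Qf u = μ ∧ Ef s r u = e}
  · exact (csInf_le hbdd ⟨u, hu, hQ, rfl⟩).trans_lt hE
  · rwa [_root_.Gamma, csInf_of_not_bddBelow hbdd, sInf_empty]

theorem gamma_improved_bound_general (s r : ℝ) (μ₀ : ℝ) (hμ₀ : 0 < μ₀) :
    ∃ κ : ℝ, 0 < κ ∧ ∀ μ ∈ Set.Ioo (0 : ℝ) μ₀, Gamma s r μ < μ - κ * μ ^ 3 := by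
  set ε := 1 / (4 * (1 + |s| + |r|) * (1 + μ₀ ^ 2)) with hε
  refine ⟨ε / 8, by positivity, fun μ ⟨hμ, hμμ₀⟩ => ?_⟩
  have hK : 0 ≤ (1 + |s| + |r|) * μ₀ ^ 2 := by positivity
  have hsε : |s| * ε ≤ 1 / 4 := by
    rw [hε, mul_one_div, div_le_iff₀ (by positivity)]
    nlinarith [abs_nonneg r]
  have hrε : |r| * ε ≤ 1 / 4 := by
    rw [hε, mul_one_div, div_le_iff₀ (by positivity)]
    nlinarith [abs_nonneg s]
  have hεμ : ε * μ ^ 2 ≤ 1 / 4 := by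
    rw [hε, one_div_mul_eq_div, div_le_iff₀ (by positivity)]
    nlinarith [abs_nonneg s, abs_nonneg r, mul_pos hμ hμ]
  have hεμ3 : 0 < ε * μ ^ 3 := by positivity
  have hsβ : |s| * (ε * μ) ^ 2 ≤ 1 := by
    nlinarith [mul_le_mul hsε hεμ (by positivity) (by norm_num)]
  have hrβ : |r| * (ε * μ) ^ 2 ≤ 1 := by
    nlinarith [mul_le_mul hrε hεμ (by positivity) (by norm_num)]
  have hβ : 0 < ε * μ := by positivity
  refine gamma_lt_of_ef_lt (by nlinarith) (memH_trialWave hμ hβ hsβ) (qf_trialWave hμ hβ)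
    ((ef_trialWave_le hμ hβ hsβ hrβ).trans_lt ?_)
  have hexcess : μ * (1 + |s| * (ε * μ) ^ 2) = μ + |s| * ε * (ε * μ ^ 3) := by ring
  nlinarith [mul_le_mul_of_nonneg_right hsε hεμ3.le]

/-- Improved upper bound: there is `κ > 0` with `Γ̃_μ < μ - κ μ³` for all
`μ ∈ (0, μ₀)`. -/
theorem gamma_improved_bound (s r : ℝ) (hs : 0 < s) (hr : r < s - 1)
    (μ₀ : ℝ) (hμ₀ : 0 < μ₀) :
    ∃ κ : ℝ, 0 < κ ∧ ∀ μ ∈ Set.Ioo (0 : ℝ) μ₀, Gamma s r μ < μ - κ * μ ^ 3 :=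
  gamma_improved_bound_general s r μ₀ hμ₀

end
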